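/- arXiv:0908.0183 — 5 statements merged into one kernel-verified Lean document; each statement's English description precedes it below -/
import Mathlib

section
/- For every s ∈ Σ, the stabilizer in G of the point [1H, s] ∈ M_Σ under the G-action l • [gH, s] = [lgH, s] equals N ∩ G_s, the intersection of N with the stabilizer G_s = {g ∈ G : g • s = s} of s in G. -/
open Pointwise

section Resolution

variable {G M : Type*} [Group G] [MulAction G M]

/-- The relation on `G × Σ` whose quotient is the resolution `M_Σ = (G/H) ×_W Σ`:
`(g, s)` is identified with `(g * n⁻¹ * h, n • s)` for `n ∈ N` and `h ∈ H`
(taking `n = 1` this collapses `G` to the coset space `G/H`). -/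
def resRel (S : Set M) (N H : Subgroup G) : G × S → G × S → Prop :=
  fun p q => ∃ n ∈ N, ∃ h ∈ H, q.1 = p.1 * n⁻¹ * h ∧ (q.2 : M) = n • (p.2 : M)

/-- The resolution `M_Σ` of the `G`-set `M` with respect to `(Σ, N, H)`. -/
def Res (S : Set M) (N H : Subgroup G) : Type _ :=
  Quot (resRel S N H)

/-- The class `[gH, s]` in the resolution `M_Σ`. -/
def resMk (S : Set M) (N H : Subgroup G) (g : G) (s : S) : Res S N H :=
  Quot.mk _ (g, s)

/-- The `G`-action on the resolution: `l • [gH, s] = [lgH, s]`. -/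
instance resAction (S : Set M) (N H : Subgroup G) : MulAction G (Res S N H) where
  smul l := Quot.map (fun p => (l * p.1, p.2)) (by
    rintro ⟨g, s⟩ ⟨g', s'⟩ hr
    obtain ⟨n, hn, h, hh, hg, hs⟩ := hr
    exact ⟨n, hn, h, hh, by simp only at hg ⊢; rw [hg]; simp [mul_assoc], hs⟩)
  one_smul := by
    intro x
    induction x using Quot.ind with
    | mk p =>
      show Quot.mk (resRel S N H) ((1 : G) * p.1, p.2) = Quot.mk (resRel S N H) p
      rw [one_mul]
  mul_smul := by
    intro a b x
    induction x using Quot.ind with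
    | mk p =>
      show Quot.mk (resRel S N H) (a * b * p.1, p.2)
          = Quot.mk (resRel S N H) (a * (b * p.1), p.2)
      rw [mul_assoc]

end Resolution

section ResolutionQuotient

variable {G M : Type*} [Group G] [MulAction G M]

theorem resRel_equivalence (S : Set M) (N H : Subgroup G)
    (hnorm : ∀ n ∈ N, ∀ h ∈ H, n * h * n⁻¹ ∈ H) :
    Equivalence (resRel S N H) where
  refl _ := ⟨1, N.one_mem, 1, H.one_mem, by simp, by simp⟩
  symm := by
    rintro ⟨g, s⟩ ⟨g', s'⟩ ⟨n, hn, h, hh, hg, hs⟩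
    refine ⟨n⁻¹, N.inv_mem hn, n⁻¹ * h⁻¹ * n, ?_, ?_, ?_⟩
    · simpa using hnorm n⁻¹ (N.inv_mem hn) h⁻¹ (H.inv_mem hh)
    · simp only at hg ⊢
      rw [hg]; group
    · simp only at hs ⊢
      rw [hs, inv_smul_smul]
  trans := by
    rintro ⟨g, s⟩ ⟨g', s'⟩ ⟨g'', s''⟩ ⟨n, hn, h, hh, hg, hs⟩ ⟨m, hm, k, hk, hg', hs'⟩
    refine ⟨m * n, N.mul_mem hm hn, m * h * m⁻¹ * k, H.mul_mem (hnorm m hm h hh) hk, ?_, ?_⟩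
    · simp only at hg hg' ⊢
      rw [hg', hg]; group
    · simp only at hs hs' ⊢
      rw [hs', hs, mul_smul]

theorem resMk_eq_resMk_iff {S : Set M} {N H : Subgroup G}
    (hnorm : ∀ n ∈ N, ∀ h ∈ H, n * h * n⁻¹ ∈ H)
    {g g' : G} {s s' : S} :
    resMk S N H g s = resMk S N H g' s' ↔ resRel S N H (g, s) (g', s') :=
  Quot.eq.trans (resRel_equivalence S N H hnorm).eqvGen_iff

theorem smul_resMk (S : Set M) (N H : Subgroup G) (l g : G) (s : S) :
    l • resMk S N H g s = resMk S N H (l * g) s :=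
  rfl

end ResolutionQuotient

theorem resolution_stabilizer_general
    {G M : Type*} [Group G] [MulAction G M] (S : Set M) (N H : Subgroup G)
    (hHN : H ≤ N) (hnorm : ∀ n ∈ N, ∀ h ∈ H, n * h * n⁻¹ ∈ H)
    (hHS : ∀ h ∈ H, ∀ s ∈ S, h • s = s)
    (s : M) (hs : s ∈ S) :
    MulAction.stabilizer G (resMk S N H 1 ⟨s, hs⟩)
      = N ⊓ MulAction.stabilizer G s := by
  ext l
  rw [MulAction.mem_stabilizer_iff, smul_resMk, mul_one, resMk_eq_resMk_iff hnorm,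
    Subgroup.mem_inf, MulAction.mem_stabilizer_iff]
  constructor
  · rintro ⟨n, hn, h, hh, hl, hns⟩
    simp only at hl hns
    obtain rfl : l = h⁻¹ * n :=
      mul_inv_eq_iff_eq_mul.mp (eq_inv_of_mul_eq_one_left hl.symm)
    exact ⟨N.mul_mem (N.inv_mem (hHN hh)) hn,
      by rw [mul_smul, ← hns, hHS _ (H.inv_mem hh) s hs]⟩
  · rintro ⟨hlN, hls⟩
    exact ⟨l, hlN, 1, H.one_mem, by simp, by simpa using hls.symm⟩

/-- The isotropy group of `[1H, s] ∈ M_Σ` is `N ∩ G_s`. -/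
theorem resolution_stabilizer
    {G M : Type*} [Group G] [MulAction G M] (S : Set M) (N H : Subgroup G)
    (hHN : H ≤ N) (hnorm : ∀ n ∈ N, ∀ h ∈ H, n * h * n⁻¹ ∈ H)
    (hNS : ∀ n ∈ N, ∀ s ∈ S, n • s ∈ S)
    (hHS : ∀ h ∈ H, ∀ s ∈ S, h • s = s)
    (s : M) (hs : s ∈ S) :
    MulAction.stabilizer G (resMk S N H 1 ⟨s, hs⟩)
      = N ⊓ MulAction.stabilizer G s :=
  resolution_stabilizer_general S N H hHN hnorm hHS s hs
end

section
/- Let Σ₀ ⊆ Σ be a subset such that for every s ∈ Σ₀ and every g ∈ G with g • s ∈ Σ₀ one has g ∈ N. Then the map φ̃ : [gH, s] ↦ g • s is injective on the subset {[gH, s] : g ∈ G, s ∈ Σ₀} of M_Σ; that is, whenever g • s = g' • s' with g, g' ∈ G and s, s' ∈ Σ₀, one has [gH, s] = [g'H, s'] in M_Σ. -/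
open Pointwise

theorem resMk_eq_of_smul_eq {G M : Type*} [Group G] [MulAction G M] {S : Set M}
    {N H : Subgroup G} {g g' : G} {s s' : S} (hN : g'⁻¹ * g ∈ N)
    (h : g • (s : M) = g' • (s' : M)) : resMk S N H g s = resMk S N H g' s' :=
  Quot.sound ⟨g'⁻¹ * g, hN, 1, one_mem H, by group, by rw [mul_smul, h, inv_smul_smul]⟩

theorem resolution_map_injective_on_regular_general
    {G M : Type*} [Group G] [MulAction G M] (S : Set M) (N H : Subgroup G)
    (S₀ : Set M) (hsub : S₀ ⊆ S)
    (hreg : ∀ s ∈ S₀, ∀ g : G, g • s ∈ S₀ → g ∈ N) :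
    ∀ (g g' : G) (s s' : M) (hs : s ∈ S₀) (hs' : s' ∈ S₀),
      g • s = g' • s' →
      resMk S N H g ⟨s, hsub hs⟩ = resMk S N H g' ⟨s', hsub hs'⟩ := by
  intro g g' s s' hs hs' heq
  have hmoves : (g'⁻¹ * g) • s = s' := by rw [mul_smul, heq, inv_smul_smul]
  exact resMk_eq_of_smul_eq (hreg s hs _ (hmoves ▸ hs')) heq

/-- On classes coming from a subset `Σ₀ ⊆ Σ` all of whose points are moved into `Σ₀`
only by elements of `N`, the map `φ̃ : [gH, s] ↦ g • s` is injective. -/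
theorem resolution_map_injective_on_regular
    {G M : Type*} [Group G] [MulAction G M] (S : Set M) (N H : Subgroup G)
    (hHN : H ≤ N) (hnorm : ∀ n ∈ N, ∀ h ∈ H, n * h * n⁻¹ ∈ H)
    (hNS : ∀ n ∈ N, ∀ s ∈ S, n • s ∈ S)
    (hHS : ∀ h ∈ H, ∀ s ∈ S, h • s = s)
    (S₀ : Set M) (hsub : S₀ ⊆ S)
    (hreg : ∀ s ∈ S₀, ∀ g : G, g • s ∈ S₀ → g ∈ N) :
    ∀ (g g' : G) (s s' : M) (hs : s ∈ S₀) (hs' : s' ∈ S₀),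
      g • s = g' • s' →
      resMk S N H g ⟨s, hsub hs⟩ = resMk S N H g' ⟨s', hsub hs'⟩ :=
  resolution_map_injective_on_regular_general S N H S₀ hsub hreg
end

section
/- Write Σ̃ = {[1H, s] : s ∈ Σ} ⊆ M_Σ. Then n • Σ̃ = Σ̃ for all n ∈ N and every h ∈ H fixes Σ̃ pointwise, so the resolution (M_Σ)_{Σ̃} of the G-set M_Σ with respect to the data (Σ̃, N, H) can be formed; and the map (M_Σ)_{Σ̃} → M_Σ given by [gH, [1H, s]] ↦ [gH, s] is a well-defined G-equivariant bijection. -/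
open Pointwise

section Resolution

variable {G M : Type*} [Group G] [MulAction G M]

/-- The canonical copy `Σ̃ = {[1H, s] : s ∈ Σ}` of `Σ` inside the resolution. -/
def tSigma (S : Set M) (N H : Subgroup G) : Set (Res S N H) :=
  Set.range fun s : S => resMk S N H 1 s

end Resolution

/-! Writing `Σ̃ = {[1H, s]}`, the stabiliser of `[1H, s]` contains `H`, so `[gH, x] ↦ g • x` is well
defined on `(M_Σ)_Σ̃` as soon as `N` normalises `H`; it is inverse to `[gH, s] ↦ [gH, [1H, s]]`,
because `g • [1H, s] = [gH, s]`. -/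

namespace Res

variable {G M : Type*} [Group G] [MulAction G M] (S : Set M) (N H : Subgroup G)

lemma smul_resMk_one (g : G) (s : S) : g • resMk S N H 1 s = resMk S N H g s :=
  congrArg (resMk S N H · s) (mul_one g)

lemma resMk_mul_of_mem_H {h : G} (hh : h ∈ H) (g : G) (s : S) :
    resMk S N H (g * h) s = resMk S N H g s :=
  (Quot.sound ⟨1, N.one_mem, h, hh, by simp, by simp⟩).symm

lemma resMk_mul_of_mem_N {n : G} (hn : n ∈ N) (g : G) {s t : S} (hst : (t : M) = n • (s : M)) :
    resMk S N H (g * n) s = resMk S N H g t :=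
  Quot.sound ⟨n, hn, 1, H.one_mem, by simp, hst⟩

lemma smul_eq_of_mem_tSigma {h : G} (hh : h ∈ H) {x : Res S N H} (hx : x ∈ tSigma S N H) :
    h • x = x := by
  obtain ⟨s, rfl⟩ := hx
  simpa [smul_resMk_one] using resMk_mul_of_mem_H S N H hh 1 s

variable {S N H}

lemma smul_mem_tSigma (hNS : ∀ n ∈ N, ∀ s ∈ S, n • s ∈ S) {n : G} (hn : n ∈ N)
    {x : Res S N H} (hx : x ∈ tSigma S N H) : n • x ∈ tSigma S N H := by
  obtain ⟨s, rfl⟩ := hx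
  refine ⟨⟨n • (s : M), hNS n hn s s.2⟩, ?_⟩
  simpa [smul_resMk_one] using (resMk_mul_of_mem_N S N H hn 1 rfl).symm

lemma smul_tSigma (hNS : ∀ n ∈ N, ∀ s ∈ S, n • s ∈ S) {n : G} (hn : n ∈ N) :
    n • tSigma S N H = tSigma S N H := by
  refine (Set.smul_set_subset_iff.2 fun x hx => smul_mem_tSigma hNS hn hx).antisymm ?_
  rw [Set.subset_smul_set_iff]
  exact Set.smul_set_subset_iff.2 fun x hx => smul_mem_tSigma hNS (N.inv_mem hn) hx

def tSigmaResToRes (hnorm : ∀ n ∈ N, ∀ h ∈ H, n * h * n⁻¹ ∈ H) :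
    Res (tSigma S N H) N H → Res S N H :=
  Quot.lift (fun p => p.1 • (p.2 : Res S N H)) <| by
    rintro ⟨g, x⟩ ⟨_, _⟩ ⟨n, hn, h, hh, rfl, hx⟩
    have hconj : n⁻¹ * h * n ∈ H := by simpa using hnorm n⁻¹ (N.inv_mem hn) h hh
    dsimp only at hx ⊢
    rw [hx, smul_smul, show g * n⁻¹ * h * n = g * (n⁻¹ * h * n) by group, mul_smul,
      smul_eq_of_mem_tSigma S N H hconj x.2]

def resToTSigmaRes : Res S N H → Res (tSigma S N H) N H :=
  Quot.lift
    (fun p => resMk (tSigma S N H) N H p.1 ⟨resMk S N H 1 p.2, Set.mem_range_self p.2⟩) <| by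
    rintro ⟨g, s⟩ ⟨_, _⟩ ⟨n, hn, h, hh, rfl, hs⟩
    refine Quot.sound ⟨n, hn, h, hh, rfl, ?_⟩
    dsimp only
    rw [smul_resMk_one, ← resMk_mul_of_mem_N S N H hn 1 hs, one_mul]

def tSigmaResEquiv (hnorm : ∀ n ∈ N, ∀ h ∈ H, n * h * n⁻¹ ∈ H) :
    Res (tSigma S N H) N H ≃ Res S N H where
  toFun := tSigmaResToRes hnorm
  invFun := resToTSigmaRes
  left_inv := by
    rintro ⟨g, _, s, rfl⟩
    show resToTSigmaRes (g • resMk S N H 1 s) = _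
    rw [smul_resMk_one]
    rfl
  right_inv := by
    rintro ⟨g, s⟩
    exact smul_resMk_one S N H g s

lemma tSigmaResEquiv_resMk (hnorm : ∀ n ∈ N, ∀ h ∈ H, n * h * n⁻¹ ∈ H) (g : G) (s : S) :
    tSigmaResEquiv hnorm (resMk (tSigma S N H) N H g ⟨resMk S N H 1 s, Set.mem_range_self s⟩)
      = resMk S N H g s :=
  smul_resMk_one S N H g s

lemma tSigmaResEquiv_smul (hnorm : ∀ n ∈ N, ∀ h ∈ H, n * h * n⁻¹ ∈ H) (l : G)
    (x : Res (tSigma S N H) N H) : tSigmaResEquiv hnorm (l • x) = l • tSigmaResEquiv hnorm x := by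
  induction x using Quot.ind with
  | mk p => exact mul_smul l p.1 (p.2 : Res S N H)

end Res

open Res in
theorem resolution_of_resolution_general
    {G M : Type*} [Group G] [MulAction G M] (S : Set M) (N H : Subgroup G)
    (hnorm : ∀ n ∈ N, ∀ h ∈ H, n * h * n⁻¹ ∈ H)
    (hNS : ∀ n ∈ N, ∀ s ∈ S, n • s ∈ S) :
    (∀ n ∈ N, n • tSigma S N H = tSigma S N H) ∧
    (∀ h ∈ H, ∀ x ∈ tSigma S N H, h • x = x) ∧
    ∃ e : Res (tSigma S N H) N H → Res S N H,
      (∀ (g : G) (s : S),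
        e (resMk (tSigma S N H) N H g ⟨resMk S N H 1 s, Set.mem_range_self s⟩)
          = resMk S N H g s) ∧
      Function.Bijective e ∧
      ∀ (l : G) (x : Res (tSigma S N H) N H), e (l • x) = l • e x :=
  ⟨fun _ hn => smul_tSigma hNS hn, fun _ hh _ hx => smul_eq_of_mem_tSigma S N H hh hx,
    tSigmaResEquiv hnorm, tSigmaResEquiv_resMk hnorm, (tSigmaResEquiv hnorm).bijective,
    tSigmaResEquiv_smul hnorm⟩

/-- `Σ̃` is `N`-invariant and fixed pointwise by `H`, so the resolution
`(M_Σ)_Σ̃` can be formed; and `[gH, [1H, s]] ↦ [gH, s]` is a well-defined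
`G`-equivariant bijection `(M_Σ)_Σ̃ → M_Σ`. -/
theorem resolution_of_resolution
    {G M : Type*} [Group G] [MulAction G M] (S : Set M) (N H : Subgroup G)
    (hHN : H ≤ N) (hnorm : ∀ n ∈ N, ∀ h ∈ H, n * h * n⁻¹ ∈ H)
    (hNS : ∀ n ∈ N, ∀ s ∈ S, n • s ∈ S)
    (hHS : ∀ h ∈ H, ∀ s ∈ S, h • s = s) :
    (∀ n ∈ N, n • tSigma S N H = tSigma S N H) ∧
    (∀ h ∈ H, ∀ x ∈ tSigma S N H, h • x = x) ∧
    ∃ e : Res (tSigma S N H) N H → Res S N H,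
      (∀ (g : G) (s : S),
        e (resMk (tSigma S N H) N H g ⟨resMk S N H 1 s, Set.mem_range_self s⟩)
          = resMk S N H g s) ∧
      Function.Bijective e ∧
      ∀ (l : G) (x : Res (tSigma S N H) N H), e (l • x) = l • e x :=
  resolution_of_resolution_general S N H hnorm hNS
end

section
/- For every real number s, the inner product ⟪exp(s • A) Y, Y⟫ equals cos(δ s). -/
/-!
Since `A (A Y) = -δ² • Y`, the even powers of `A` send `Y` to `(-δ²)ᵏ • Y` and the odd ones to
`(-δ²)ᵏ • A Y`, while skew-adjointness gives `⟪A Y, Y⟫ = 0`. Hence the exponential series of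
`⟪exp (s • A) Y, Y⟫` is, term by term, the Taylor series of `cos (δ s)`.
-/

open NormedSpace RealInnerProductSpace
open scoped Nat

theorem hasSum_inner_exp_smul_apply {E : Type*} [NormedAddCommGroup E] [InnerProductSpace ℝ E]
    [CompleteSpace E] (A : E →L[ℝ] E) (s : ℝ) (x y : E) :
    HasSum (fun n => (n ! : ℝ)⁻¹ * s ^ n * ⟪(A ^ n) x, y⟫) ⟪exp (s • A) x, y⟫ := by
  have h := (exp_series_hasSum_exp' (𝕂 := ℝ) (s • A)).mapL
    ((innerSL ℝ y).comp (ContinuousLinearMap.apply ℝ E x))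
  simpa only [ContinuousLinearMap.comp_apply, ContinuousLinearMap.apply_apply, innerSL_apply_apply,
    smul_pow, smul_apply, inner_smul_right, real_inner_comm y, smul_smul,
    mul_comm _ (s ^ _)] using h

theorem ContinuousLinearMap.pow_two_mul_apply_of_apply_apply_eq_smul {R M : Type*} [Semiring R]
    [AddCommMonoid M] [Module R M] [TopologicalSpace M] {f : M →L[R] M} {c : R} {y : M}
    (hf : f (f y) = c • y) (k : ℕ) : (f ^ (2 * k)) y = c ^ k • y := by
  induction k with
  | zero => simp
  | succ k ih =>
    rw [mul_add_one, pow_add, mul_apply_eq_comp, sq, mul_apply_eq_comp, hf, map_smul, ih,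
      smul_smul, pow_succ']

theorem ContinuousLinearMap.pow_two_mul_add_one_apply_of_apply_apply_eq_smul {R M : Type*}
    [Semiring R] [AddCommMonoid M] [Module R M] [TopologicalSpace M] {f : M →L[R] M} {c : R} {y : M}
    (hf : f (f y) = c • y) (k : ℕ) : (f ^ (2 * k + 1)) y = c ^ k • f y := by
  rw [pow_succ', mul_apply_eq_comp, pow_two_mul_apply_of_apply_apply_eq_smul hf, map_smul]

theorem inner_apply_self_eq_zero_of_skew {E : Type*} [NormedAddCommGroup E] [InnerProductSpace ℝ E]
    {A : E →L[ℝ] E} (hA : ∀ x y : E, ⟪A x, y⟫ = -⟪x, A y⟫) (x : E) : ⟪A x, x⟫ = 0 := by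
  linarith [hA x x, real_inner_comm x (A x)]

theorem Real.hasSum_cos_mul_of_even_odd {c : ℕ → ℝ} {δ : ℝ} (heven : ∀ k, c (2 * k) = (-δ ^ 2) ^ k)
    (hodd : ∀ k, c (2 * k + 1) = 0) (s : ℝ) :
    HasSum (fun n => (n ! : ℝ)⁻¹ * s ^ n * c n) (Real.cos (δ * s)) := by
  have hcos : HasSum (fun k => ((2 * k)! : ℝ)⁻¹ * s ^ (2 * k) * c (2 * k)) (Real.cos (δ * s)) :=
    (Real.hasSum_cos (δ * s)).congr_fun fun k => by
      rw [heven, neg_pow, ← pow_mul, mul_pow]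
      field_simp
  simpa using hcos.even_add_odd (f := fun n => (n ! : ℝ)⁻¹ * s ^ n * c n)
    (hasSum_zero.congr_fun fun k => by simp [hodd])

/-- If `A` is a skew-adjoint continuous operator on a real Hilbert space,
`‖Y‖ = 1` and `A (A Y) = -δ² • Y`, then `⟪exp(s • A) Y, Y⟫ = cos (δ s)`. -/
theorem inner_exp_smul_skewAdjoint_eq_cos
    {E : Type*} [NormedAddCommGroup E] [InnerProductSpace ℝ E] [CompleteSpace E]
    (A : E →L[ℝ] E) (hA : ∀ x y : E, (inner ℝ (A x) y : ℝ) = - inner ℝ x (A y))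
    (Y : E) (hY : ‖Y‖ = 1) (δ : ℝ) (hAA : A (A Y) = -(δ ^ 2) • Y) :
    ∀ s : ℝ, (inner ℝ ((NormedSpace.exp (s • A)) Y) Y : ℝ) = Real.cos (δ * s) := by
  intro s
  have hYY : ⟪Y, Y⟫ = 1 := by rw [real_inner_self_eq_norm_sq, hY, one_pow]
  have heven (k : ℕ) : ⟪(A ^ (2 * k)) Y, Y⟫ = (-δ ^ 2) ^ k := by
    rw [A.pow_two_mul_apply_of_apply_apply_eq_smul hAA, real_inner_smul_left, hYY, mul_one]
  have hodd (k : ℕ) : ⟪(A ^ (2 * k + 1)) Y, Y⟫ = 0 := by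
    rw [A.pow_two_mul_add_one_apply_of_apply_apply_eq_smul hAA, real_inner_smul_left,
      inner_apply_self_eq_zero_of_skew hA, mul_zero]
  exact (hasSum_inner_exp_smul_apply A s Y Y).unique (Real.hasSum_cos_mul_of_even_odd heven hodd s)
end

section
/- Assume in addition that δ ≠ 0, and let p(n) denote the n-th odd prime (the n-th prime number greater than 2). Then the family of functions F : ℕ → (ℝ → E) defined by F(n)(t) = exp(((1 − t)/p(n)) • A) Y is linearly independent over ℝ in the real vector space of functions from ℝ to E. -/
/-!
On the plane spanned by `Y` and `v = δ⁻¹ • A Y` the operator `A` acts as multiplication by `δ i`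
on `ℂ`, so `exp (s • A) Y` is the image of `exp (i δ s)` under the injective real-linear map
`z ↦ re z • Y + im z • v` (injective because an operator squaring to `-δ²` on `Y` has no real
eigenvector there). The family is therefore the injective image of the functions
`t ↦ exp (i ωₙ (1 - t))` with pairwise distinct frequencies `ωₙ = δ / pₙ`, and these are linearly
independent by Artin's lemma on distinct characters of `(ℝ, +)`.
-/

/-- The `n`-th odd prime (the `n`-th prime number greater than `2`), `0`-indexed. -/
noncomputable def nthOddPrime (n : ℕ) : ℕ :=
  Nat.nth (fun q => Nat.Prime q ∧ 2 < q) n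

open Complex (I)
open Function

theorem linearIndependent_pair_of_rotation {K M : Type*} [Field K] [LinearOrder K]
    [IsStrictOrderedRing K] [AddCommGroup M] [Module K M] {A : M →ₗ[K] M} {u v : M} {δ : K}
    (hu : A u = δ • v) (hv : A v = -δ • u) (hu0 : u ≠ 0) (hδ : δ ≠ 0) :
    LinearIndependent K ![u, v] := by
  rw [LinearIndependent.pair_iff]
  intro s t hst
  have hrot : s • v = t • u := by
    have hA := congrArg A hst
    rw [map_add, map_smul, map_smul, hu, hv, map_zero] at hA
    have h : δ • (s • v - t • u) = 0 := by rw [← hA]; module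
    exact sub_eq_zero.mp ((smul_eq_zero.mp h).resolve_left hδ)
  have hsq : (s ^ 2 + t ^ 2) • u = 0 :=
    calc (s ^ 2 + t ^ 2) • u = s • (s • u + t • v) := by
          rw [smul_add, smul_comm s t, hrot, smul_smul, smul_smul, ← add_smul, sq, sq]
      _ = 0 := by rw [hst, smul_zero]
  have hsum : s ^ 2 + t ^ 2 = 0 := (smul_eq_zero.mp hsq).resolve_right hu0
  constructor <;> nlinarith [sq_nonneg s, sq_nonneg t]

section ReImCombination

variable {E : Type*} [NormedAddCommGroup E] [NormedSpace ℝ E]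

noncomputable def reImCombination (u v : E) : ℂ →L[ℝ] E :=
  Complex.reCLM.smulRight u + Complex.imCLM.smulRight v

variable {u v : E}

@[simp]
theorem reImCombination_apply (z : ℂ) : reImCombination u v z = z.re • u + z.im • v := rfl

theorem reImCombination_one : reImCombination u v 1 = u := by simp

theorem reImCombination_injective (h : LinearIndependent ℝ ![u, v]) :
    Injective (reImCombination u v) :=
  (injective_iff_map_eq_zero _).mpr fun _ hz ↦
    let ⟨hre, him⟩ := LinearIndependent.pair_iff.mp h _ _ hz
    Complex.ext hre him

variable {A : E →L[ℝ] E} {δ : ℝ}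

theorem apply_reImCombination (hu : A u = δ • v) (hv : A v = -δ • u) (z : ℂ) :
    A (reImCombination u v z) = reImCombination u v (δ * I * z) := by
  simp only [reImCombination_apply, map_add, map_smul, hu, hv, smul_smul, Complex.mul_re,
    Complex.mul_im, Complex.ofReal_re, Complex.ofReal_im, Complex.I_re, Complex.I_im]
  module

theorem pow_apply_reImCombination (hu : A u = δ • v) (hv : A v = -δ • u) (n : ℕ) (z : ℂ) :
    (A ^ n) (reImCombination u v z) = reImCombination u v ((δ * I) ^ n * z) := by
  induction n with
  | zero => simp
  | succ n ih =>
    rw [pow_succ', mul_apply_eq_comp, ih, apply_reImCombination hu hv, pow_succ', ← mul_assoc]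

theorem exp_smul_apply_reImCombination [CompleteSpace E] (hu : A u = δ • v)
    (hv : A v = -δ • u) (s : ℝ) (z : ℂ) :
    NormedSpace.exp (s • A) (reImCombination u v z) =
      reImCombination u v (Complex.exp (s * δ * I) * z) := by
  have hA := (NormedSpace.exp_series_hasSum_exp' (𝕂 := ℝ) (s • A)).mapL
    (ContinuousLinearMap.apply ℝ E (reImCombination u v z))
  have hC : HasSum (fun n : ℕ ↦ (n.factorial⁻¹ : ℂ) • (s * δ * I) ^ n)
      (Complex.exp (s * δ * I)) := by
    rw [Complex.exp_eq_exp_ℂ]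
    exact NormedSpace.exp_series_hasSum_exp' _
  refine hA.unique (((hC.mul_right z).mapL (reImCombination u v)).congr_fun fun n ↦ ?_)
  simp only [ContinuousLinearMap.apply_apply, smul_apply, smul_pow,
    pow_apply_reImCombination hu hv]
  rw [← map_smul, ← map_smul]
  congr 1
  simp only [Complex.real_smul, smul_eq_mul]
  push_cast
  ring

end ReImCombination

noncomputable def expMulIHom (ω : ℝ) : Multiplicative ℝ →* ℂ where
  toFun t := Complex.exp (ω * t.toAdd * I)
  map_one' := by simp
  map_mul' s t := by simp [mul_add, add_mul, Complex.exp_add]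

theorem expMulIHom_injective : Injective expMulIHom := by
  intro a b h
  by_contra hab
  -- at `t = π / (a - b)` the two characters differ by the factor `exp (π i) = -1`
  have hpi := DFunLike.congr_fun h (Multiplicative.ofAdd (Real.pi / (a - b)))
  simp only [expMulIHom, MonoidHom.coe_mk, OneHom.coe_mk, toAdd_ofAdd] at hpi
  have hshift : (a : ℂ) * ↑(Real.pi / (a - b)) * I =
      b * ↑(Real.pi / (a - b)) * I + Real.pi * I := by
    have : (a : ℂ) - b ≠ 0 := by exact_mod_cast sub_ne_zero.mpr hab
    push_cast
    field_simp
    ring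
  rw [hshift, Complex.exp_add, Complex.exp_pi_mul_I, mul_neg_one, eq_comm, self_eq_neg] at hpi
  exact Complex.exp_ne_zero _ hpi

theorem linearIndependent_exp_mul_I {ι : Type*} {ω : ι → ℝ} (hω : Injective ω) :
    LinearIndependent ℂ (fun i (t : ℝ) ↦ Complex.exp (ω i * t * I)) :=
  (linearIndependent_monoidHom (Multiplicative ℝ) ℂ).comp _ (expMulIHom_injective.comp hω)

theorem infinite_setOf_odd_prime : {q : ℕ | q.Prime ∧ 2 < q}.Infinite :=
  (Nat.infinite_setOfPred_prime.sdiff (Set.finite_le_nat 2)).mono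
    fun _ hq ↦ ⟨hq.1, not_le.mp hq.2⟩

theorem nthOddPrime_injective : Injective nthOddPrime :=
  Nat.nth_injective infinite_setOf_odd_prime

theorem exp_family_linearIndependent_general
    {E : Type*} [NormedAddCommGroup E] [InnerProductSpace ℝ E] [CompleteSpace E]
    (A : E →L[ℝ] E)
    (Y : E) (hY : ‖Y‖ = 1) (δ : ℝ) (hAA : A (A Y) = -(δ ^ 2) • Y) (hδ : δ ≠ 0) :
    LinearIndependent ℝ (fun n : ℕ => fun t : ℝ =>
      (NormedSpace.exp (((1 - t) / (nthOddPrime n : ℝ)) • A)) Y) := by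
  set v := δ⁻¹ • A Y
  have hu : A Y = δ • v := by rw [smul_smul, mul_inv_cancel₀ hδ, one_smul]
  have hv : A v = -δ • Y := by
    rw [map_smul, hAA, smul_smul]
    congr 1
    field_simp
  have hY0 : Y ≠ 0 := norm_ne_zero_iff.mp (hY ▸ one_ne_zero)
  set J := reImCombination Y v
  have hJ : Injective J := reImCombination_injective
    (linearIndependent_pair_of_rotation (A := (A : E →ₗ[ℝ] E)) hu hv hY0 hδ)
  have hω : Injective fun n ↦ δ / nthOddPrime n := fun m n hmn ↦
    nthOddPrime_injective (Nat.cast_injective (inv_injective (mul_left_cancel₀ hδ hmn)))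
  set Φ : (ℝ → ℂ) →ₗ[ℝ] (ℝ → E) :=
    (J : ℂ →ₗ[ℝ] E).compLeft ℝ ∘ₗ LinearMap.funLeft ℝ ℂ (fun t ↦ 1 - t)
  have hΦ : Injective Φ := hJ.comp_left.comp
    (LinearMap.funLeft_injective_of_surjective _ _ _ fun t ↦ ⟨1 - t, sub_sub_cancel 1 t⟩)
  have hF : (fun n (t : ℝ) ↦ NormedSpace.exp (((1 - t) / (nthOddPrime n : ℝ)) • A) Y) =
      Φ ∘ fun n t ↦ Complex.exp (↑(δ / nthOddPrime n) * t * I) := by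
    funext n t
    rw [← reImCombination_one (u := Y) (v := v), exp_smul_apply_reImCombination hu hv, mul_one]
    show J _ = J _
    congr 2
    push_cast
    ring
  rw [hF]
  exact ((linearIndependent_exp_mul_I hω).restrict_scalars' ℝ).map' Φ
    (LinearMap.ker_eq_bot.mpr hΦ)

/-- If `A` is a skew-adjoint continuous operator on a real Hilbert space, `‖Y‖ = 1`,
`A (A Y) = -δ² • Y` and `δ ≠ 0`, then the family of functions
`t ↦ exp (((1 - t)/pₙ) • A) Y`, indexed by `n` where `pₙ` is the `n`-th odd prime,
is linearly independent over `ℝ` in the space of functions `ℝ → E`. -/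
theorem exp_family_linearIndependent
    {E : Type*} [NormedAddCommGroup E] [InnerProductSpace ℝ E] [CompleteSpace E]
    (A : E →L[ℝ] E) (hA : ∀ x y : E, (inner ℝ (A x) y : ℝ) = - inner ℝ x (A y))
    (Y : E) (hY : ‖Y‖ = 1) (δ : ℝ) (hAA : A (A Y) = -(δ ^ 2) • Y) (hδ : δ ≠ 0) :
    LinearIndependent ℝ (fun n : ℕ => fun t : ℝ =>
      (NormedSpace.exp (((1 - t) / (nthOddPrime n : ℝ)) • A)) Y) :=
  exp_family_linearIndependent_general A Y hY δ hAA hδ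
end
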